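/- Let (A, F) be a unary algebra equipped with the topology whose open sets are generated by the universes of subalgebras. Then (A, F) is a Ramsey algebra if and only if the set S = {c ∈ A : f(c) = c for all f ∈ F} of common fixed points is dense in A. -/

import Mathlib

/-!
The operations are unary, so an orderly term uses exactly one entry of the sequence it is
applied to: `FR b` is the union of the subalgebras `⟨b k⟩ = {y | Reaches F (b k) y}`, and the
reductions of `b` are the sequences `a` with `a k ∈ ⟨b (e k)⟩` for a strictly increasing `e`.
The open sets of the topology are exactly the subalgebras, so `⟨x⟩` is the smallest
neighbourhood of `x`, and density of the common fixed points says that every `⟨x⟩` contains one.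

If it does, replace each `b k` by a common fixed point in `⟨b k⟩` and pass to a subsequence lying
inside `X` or outside it; the `FR` of that subsequence is its range. Conversely, suppose `⟨x⟩`
contains no common fixed point and let `g` move each point of `⟨x⟩` by an operation that does not
fix it. Some `X` meets and misses every forward `g`-orbit free of fixed points: on a grand orbit
containing a cycle mark one point of the cycle, on the other grand orbits colour by the parity of
the height. A reduction `a` of the constant sequence `x` has `FR a ⊇ ⟨a 0⟩`, which contains the
`g`-orbit of `a 0`, so it is not homogeneous for `X`.
-/

namespace RamseyAlg

/- Orderly-term syntax trees over an operation-index type `ι`: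
`leaf` is the identity (a single variable), `node g f` applies the basic
operation `g` to the results of the trees in the forest `f`. -/
mutual
  inductive OTree (ι : Type) : Type
    | leaf : OTree ι
    | node : ι → OForest ι → OTree ι
  inductive OForest (ι : Type) : Type
    | nil : OForest ι
    | cons : OTree ι → OForest ι → OForest ι
end

def OForest.length {ι : Type} : OForest ι → ℕ
  | .nil => 0
  | .cons _ f => f.length + 1

/- Well-formedness: each node applies a `k`-ary basic operation to exactly
`k` subtrees, where `ar` gives the arities. -/
mutual
  def OTree.WF {ι : Type} (ar : ι → ℕ) : OTree ι → Prop
    | .leaf => True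
    | .node g f => OForest.length f = ar g ∧ OForest.WF ar f
  def OForest.WF {ι : Type} (ar : ι → ℕ) : OForest ι → Prop
    | .nil => True
    | .cons t f => OTree.WF ar t ∧ OForest.WF ar f
end

/- Evaluation of an orderly term on an input list: the variables of the term
consume an initial segment of the list, in order, each exactly once; what
remains of the list is returned alongside the value. -/
mutual
  def OTree.evalAux {ι A : Type} (F : ι → List A → A) :
      OTree ι → List A → Option (A × List A)
    | .leaf, [] => none
    | .leaf, a :: rest => some (a, rest)
    | .node g f, l =>
      match OForest.evalAux F f l with
      | none => none
      | some (rs, rest) => some (F g rs, rest)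
  def OForest.evalAux {ι A : Type} (F : ι → List A → A) :
      OForest ι → List A → Option (List A × List A)
    | .nil, l => some ([], l)
    | .cons t f, l =>
      match OTree.evalAux F t l with
      | none => none
      | some (r, rest) =>
        match OForest.evalAux F f rest with
        | none => none
        | some (rs, rest') => some (r :: rs, rest')
end

/- The value of the orderly term `t` on the finite sequence `l`, defined
exactly when the variables of `t` consume all of `l`. -/
def OTree.eval {ι A : Type} (F : ι → List A → A) (t : OTree ι) (l : List A) :
    Option A :=
  match OTree.evalAux F t l with
  | some (a, []) => some a
  | _ => none

/- `Reduction ar F a b` : `a` is a reduction of `b` with respect to `F`, i.e.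
there are well-formed orderly terms `t j` applied to consecutive disjoint
finite subsequences of `b` (extracted by the strictly monotone `e`, in blocks
of lengths `len j`) producing the terms of `a` in order. -/
def Reduction {ι A : Type} (ar : ι → ℕ) (F : ι → List A → A)
    (a b : ℕ → A) : Prop :=
  ∃ (t : ℕ → OTree ι) (len : ℕ → ℕ) (e : ℕ → ℕ),
    StrictMono e ∧ (∀ j, (t j).WF ar) ∧
    ∀ j, (t j).eval F ((List.range (len j)).map
        (fun i => b (e ((∑ m ∈ Finset.range j, len m) + i)))) = some (a j)

/- `FR ar F b` : the set of values of orderly terms over `F` applied to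
finite subsequences of `b`. -/
def FR {ι A : Type} (ar : ι → ℕ) (F : ι → List A → A) (b : ℕ → A) : Set A :=
  { x | ∃ (t : OTree ι) (l : List ℕ), t.WF ar ∧ l.Chain' (· < ·) ∧
      t.eval F (l.map b) = some x }

/- `(A, F)` is a Ramsey algebra: every infinite sequence has, for every
`X ⊆ A`, a reduction homogeneous for `X`. -/
def RamseyAlgebra {ι A : Type} (ar : ι → ℕ) (F : ι → List A → A) : Prop :=
  ∀ (b : ℕ → A) (X : Set A), ∃ a : ℕ → A,
    Reduction ar F a b ∧ (FR ar F a ⊆ X ∨ FR ar F a ∩ X = ∅)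

end RamseyAlg

namespace Function

variable {α : Type*} {g : α → α}

def GrandOrbitRel (g : α → α) (z w : α) : Prop := ∃ m n, g^[m] z = g^[n] w

theorem GrandOrbitRel.symm {z w : α} (h : GrandOrbitRel g z w) : GrandOrbitRel g w z :=
  let ⟨m, n, h⟩ := h; ⟨n, m, h.symm⟩

theorem GrandOrbitRel.trans {u v w : α} (huv : GrandOrbitRel g u v)
    (hvw : GrandOrbitRel g v w) : GrandOrbitRel g u w := by
  obtain ⟨m, n, h⟩ := huv
  obtain ⟨m', n', h'⟩ := hvw
  refine ⟨m' + m, n + n', ?_⟩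
  rw [iterate_add_apply, h, ← iterate_add_apply, add_comm, iterate_add_apply, h',
    ← iterate_add_apply]

theorem grandOrbitRel_iterate_left (z : α) (n : ℕ) : GrandOrbitRel g (g^[n] z) z :=
  ⟨0, n, rfl⟩

theorem iterate_injective_of_forall_notMem_periodicPts {c : α}
    (hc : ∀ k, g^[k] c ∉ periodicPts g) : Injective fun n => g^[n] c := by
  have key : ∀ a b, a < b → g^[a] c ≠ g^[b] c := fun a b hab heq =>
    hc a <| mk_mem_periodicPts (Nat.sub_pos_of_lt hab) <| by
      rw [IsPeriodicPt, IsFixedPt, ← iterate_add_apply, Nat.sub_add_cancel hab.le, heq]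
  intro a b hab
  rcases lt_trichotomy a b with h | h | h
  · exact absurd hab (key a b h)
  · exact h
  · exact absurd hab.symm (key b a h)

theorem add_eq_add_of_iterate_eq {z c : α} (hc : ∀ k, g^[k] c ∉ periodicPts g)
    {m n m' n' : ℕ} (h : g^[m] z = g^[n] c) (h' : g^[m'] z = g^[n'] c) :
    m' + n = m + n' := by
  apply iterate_injective_of_forall_notMem_periodicPts hc
  show g^[m' + n] c = g^[m + n'] c
  rw [iterate_add_apply, ← h, ← iterate_add_apply, add_comm, iterate_add_apply, h',
    ← iterate_add_apply]

def IsGrandOrbitCenter (g : α → α) (z w : α) : Prop :=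
  GrandOrbitRel g z w ∧ ∀ w', GrandOrbitRel g z w' → w' ∈ periodicPts g → w ∈ periodicPts g

noncomputable def grandOrbitCenter (g : α → α) (z : α) : α :=
  @Classical.epsilon α ⟨z⟩ (IsGrandOrbitCenter g z)

theorem isGrandOrbitCenter_grandOrbitCenter (z : α) :
    IsGrandOrbitCenter g z (grandOrbitCenter g z) := by
  apply Classical.epsilon_spec
  by_cases h : ∃ w, GrandOrbitRel g z w ∧ w ∈ periodicPts g
  · obtain ⟨w, hzw, hw⟩ := h
    exact ⟨w, hzw, fun _ _ _ => hw⟩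
  · push Not at h
    exact ⟨z, ⟨0, 0, rfl⟩, fun w hzw hw => absurd hw (h w hzw)⟩

theorem grandOrbitCenter_eq {z z' : α} (h : GrandOrbitRel g z z') :
    grandOrbitCenter g z = grandOrbitCenter g z' := by
  have hrel : ∀ w, GrandOrbitRel g z w ↔ GrandOrbitRel g z' w := fun _ =>
    ⟨h.symm.trans, h.trans⟩
  have hiff : IsGrandOrbitCenter g z = IsGrandOrbitCenter g z' := by
    ext w
    simp only [IsGrandOrbitCenter, hrel]
  rw [grandOrbitCenter, grandOrbitCenter, hiff]

open Classical in
/-- Without a cycle, the height `n - m` of `z` above the center is well defined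
(`add_eq_add_of_iterate_eq`) and its parity colours `z`. Parity fails on odd cycles, so a grand
orbit with a cycle only marks its center, a point of the cycle. -/
def grandOrbitColoring (g : α → α) : Set α :=
  {z | if grandOrbitCenter g z ∈ periodicPts g then z = grandOrbitCenter g z
    else ∃ m n, g^[m] z = g^[n] (grandOrbitCenter g z) ∧ Even (m + n)}

theorem mem_grandOrbitColoring_iff_even {z : α} (hc : grandOrbitCenter g z ∉ periodicPts g)
    {m n : ℕ} (h : g^[m] z = g^[n] (grandOrbitCenter g z)) :
    z ∈ grandOrbitColoring g ↔ Even (m + n) := by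
  have hc' : ∀ k, g^[k] (grandOrbitCenter g z) ∉ periodicPts g := fun k hk =>
    hc <| (isGrandOrbitCenter_grandOrbitCenter z).2 _
      ((isGrandOrbitCenter_grandOrbitCenter z).1.trans (grandOrbitRel_iterate_left _ k).symm) hk
  simp only [grandOrbitColoring, Set.mem_ofPred_eq, if_neg hc]
  refine ⟨fun ⟨m', n', h', he⟩ => ?_, fun he => ⟨m, n, h, he⟩⟩
  have := add_eq_add_of_iterate_eq hc' h h'
  rw [Nat.even_iff] at he ⊢
  omega

theorem exists_iterate_mem_and_notMem_grandOrbitColoring {z : α}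
    (hz : ∀ n, g (g^[n] z) ≠ g^[n] z) :
    (∃ n, g^[n] z ∈ grandOrbitColoring g) ∧ ∃ n, g^[n] z ∉ grandOrbitColoring g := by
  obtain ⟨⟨m, n, hmn⟩, -⟩ := isGrandOrbitCenter_grandOrbitCenter (g := g) z
  have hcenter : ∀ j, grandOrbitCenter g (g^[j] z) = grandOrbitCenter g z := fun j =>
    grandOrbitCenter_eq (grandOrbitRel_iterate_left z j)
  generalize hc_def : grandOrbitCenter g z = c at hmn hcenter
  by_cases hc : c ∈ periodicPts g
  · obtain ⟨k, hk, hck⟩ := mem_periodicPts.1 hc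
    obtain ⟨k, rfl⟩ : ∃ k', k = k' + 1 := ⟨k - 1, by omega⟩
    have hreach : g^[k * n + m] z = c := by
      rw [iterate_add_apply, hmn, ← iterate_add_apply, ← Nat.succ_mul]
      exact (hck.mul_const n).eq
    have hmem : ∀ j, g^[j] z ∈ grandOrbitColoring g ↔ g^[j] z = c := fun j => by
      rw [grandOrbitColoring, Set.mem_ofPred_eq, hcenter, if_pos hc]
    refine ⟨⟨k * n + m, (hmem _).2 hreach⟩, ⟨k * n + m + 1, fun h => ?_⟩⟩
    rw [hmem, iterate_succ_apply', ← hreach] at h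
    exact hz _ h
  · have hmn' : g^[m] (g^[1] z) = g^[n + 1] (grandOrbitCenter g (g^[1] z)) := by
      rw [hcenter, ← iterate_add_apply, Nat.add_comm m 1, iterate_add_apply, hmn,
        ← iterate_add_apply, Nat.add_comm]
    have h0 := mem_grandOrbitColoring_iff_even (hc_def ▸ hc) (hc_def ▸ hmn)
    have h1 := mem_grandOrbitColoring_iff_even (hcenter 1 ▸ hc) hmn'
    by_cases hzX : z ∈ grandOrbitColoring g
    · refine ⟨⟨0, hzX⟩, ⟨1, ?_⟩⟩
      rw [h1, ← add_assoc, Nat.even_add_one, not_not, ← h0]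
      exact hzX
    · refine ⟨⟨1, ?_⟩, ⟨0, hzX⟩⟩
      rw [h1, ← add_assoc, Nat.even_add_one, ← h0]
      exact hzX

end Function

theorem exists_strictMono_forall_mem_or_forall_notMem {α : Type*} (y : ℕ → α) (X : Set α) :
    ∃ e : ℕ → ℕ, StrictMono e ∧ ((∀ k, y (e k) ∈ X) ∨ ∀ k, y (e k) ∉ X) := by
  rcases Filter.frequently_or_distrib.1
    (Filter.Frequently.of_forall (f := Filter.atTop) fun j => em (y j ∈ X))
    with h | h
  · obtain ⟨e, he, hX⟩ := Filter.extraction_of_frequently_atTop h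
    exact ⟨e, he, .inl hX⟩
  · obtain ⟨e, he, hX⟩ := Filter.extraction_of_frequently_atTop h
    exact ⟨e, he, .inr hX⟩

namespace RamseyAlg

open scoped Topology

variable {ι A : Type} {F : ι → A → A} {Fop : ι → List A → A}

abbrev Reaches (F : ι → A → A) : A → A → Prop :=
  Relation.ReflTransGen fun x y => ∃ i, F i x = y

theorem Reaches.mem {U : Set A} (hU : ∀ i, ∀ x ∈ U, F i x ∈ U) {x y : A}
    (hx : x ∈ U) (h : Reaches F x y) : y ∈ U := by
  induction h with
  | refl => exact hx
  | tail _ hstep ih =>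
    obtain ⟨i, rfl⟩ := hstep
    exact hU i _ ih

theorem Reaches.eq_of_forall_apply_eq {x y : A} (hx : ∀ i, F i x = x)
    (h : Reaches F x y) : y = x :=
  h.mem (U := {x}) (fun i _ hz => hz ▸ hx i) rfl

theorem isOpen_generateFrom_iff (F : ι → A → A) {U : Set A} :
    IsOpen[TopologicalSpace.generateFrom {S : Set A | ∀ i, ∀ x ∈ S, F i x ∈ S}] U ↔
      ∀ i, ∀ x ∈ U, F i x ∈ U := by
  refine ⟨fun hU => ?_, fun hU => TopologicalSpace.isOpen_generateFrom_of_mem hU⟩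
  induction hU with
  | basic S hS => exact hS
  | univ => exact fun _ _ _ => trivial
  | inter U V _ _ hU hV => exact fun i x hx => ⟨hU i x hx.1, hV i x hx.2⟩
  | sUnion S _ ih =>
    rintro i x ⟨U, hU, hxU⟩
    exact ⟨U, hU, ih U hU i x hxU⟩

theorem dense_generateFrom_iff (F : ι → A → A) {S : Set A} :
    @Dense A (TopologicalSpace.generateFrom {S : Set A | ∀ i, ∀ x ∈ S, F i x ∈ S}) S ↔
      ∀ x, ∃ y, Reaches F x y ∧ y ∈ S := by
  let _ := TopologicalSpace.generateFrom {S : Set A | ∀ i, ∀ x ∈ S, F i x ∈ S}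
  refine ⟨fun hS x => ?_, fun h x => mem_closure_iff.2 fun U hU hxU => ?_⟩
  · have hopen : IsOpen {y | Reaches F x y} :=
      (isOpen_generateFrom_iff F).2 fun i y (hy : Reaches F x y) => hy.tail ⟨i, rfl⟩
    exact mem_closure_iff.1 (hS x) _ hopen .refl
  · obtain ⟨y, hxy, hyS⟩ := h x
    exact ⟨y, hxy.mem ((isOpen_generateFrom_iff F).1 hU) hxU, hyS⟩

theorem OTree.evalAux_nil_of_wf : ∀ (t : OTree ι), t.WF (fun _ => 1) →
    t.evalAux Fop [] = none
  | .leaf, _ => rfl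
  | .node _ .nil, h => absurd h.1 (by simp [OForest.length])
  | .node _ (.cons _ (.cons _ _)), h => absurd h.1 (by simp [OForest.length])
  | .node _ (.cons t .nil), h => by
    simp [OTree.evalAux, OForest.evalAux, evalAux_nil_of_wf t h.2.1]

theorem OTree.evalAux_cons_of_wf (hOp : ∀ i x, Fop i [x] = F i x) :
    ∀ (t : OTree ι), t.WF (fun _ => 1) → ∀ x l,
      ∃ y, Reaches F x y ∧ t.evalAux Fop (x :: l) = some (y, l)
  | .leaf, _, x, l => ⟨x, .refl, rfl⟩
  | .node _ .nil, h, _, _ => absurd h.1 (by simp [OForest.length])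
  | .node _ (.cons _ (.cons _ _)), h, _, _ => absurd h.1 (by simp [OForest.length])
  | .node i (.cons t .nil), h, x, l => by
    obtain ⟨y, hxy, hy⟩ := evalAux_cons_of_wf hOp t h.2.1 x l
    exact ⟨F i y, hxy.tail ⟨i, rfl⟩, by simp [OTree.evalAux, OForest.evalAux, hy, hOp]⟩

theorem OTree.exists_eq_singleton_of_eval_eq_some (hOp : ∀ i x, Fop i [x] = F i x)
    {t : OTree ι} (ht : t.WF (fun _ => 1)) {l : List A} {y : A} (h : t.eval Fop l = some y) :
    ∃ x, l = [x] ∧ Reaches F x y := by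
  match l with
  | [] => simp [OTree.eval, evalAux_nil_of_wf t ht] at h
  | x :: l =>
    obtain ⟨y', hxy', he⟩ := evalAux_cons_of_wf hOp t ht x l
    cases l with
    | nil => simp_all [OTree.eval]
    | cons _ _ => simp [OTree.eval, he] at h

theorem exists_eval_eq_some_of_reaches (hOp : ∀ i x, Fop i [x] = F i x) {x y : A}
    (h : Reaches F x y) : ∃ t : OTree ι, t.WF (fun _ => 1) ∧ t.eval Fop [x] = some y := by
  suffices ∃ t : OTree ι, t.WF (fun _ => 1) ∧ t.evalAux Fop [x] = some (y, []) by
    obtain ⟨t, ht, he⟩ := this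
    exact ⟨t, ht, by simp [OTree.eval, he]⟩
  induction h with
  | refl => exact ⟨.leaf, trivial, rfl⟩
  | tail _ hstep ih =>
    obtain ⟨i, rfl⟩ := hstep
    obtain ⟨t, ht, hte⟩ := ih
    exact ⟨.node i (.cons t .nil), ⟨rfl, ht, trivial⟩,
      by simp [OTree.evalAux, OForest.evalAux, hte, hOp]⟩

theorem mem_FR_iff_exists_reaches (hOp : ∀ i x, Fop i [x] = F i x) {b : ℕ → A} {y : A} :
    y ∈ FR (fun _ => 1) Fop b ↔ ∃ k, Reaches F (b k) y := by
  constructor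
  · rintro ⟨t, l, ht, -, hte⟩
    obtain ⟨x, hl, hxy⟩ := OTree.exists_eq_singleton_of_eval_eq_some hOp ht hte
    obtain ⟨k, rfl, rfl⟩ := List.map_eq_singleton_iff.1 hl
    exact ⟨k, hxy⟩
  · rintro ⟨k, hk⟩
    obtain ⟨t, ht, hte⟩ := exists_eval_eq_some_of_reaches hOp hk
    exact ⟨t, [k], ht, List.isChain_singleton k, hte⟩

theorem reduction_iff_exists_strictMono (hOp : ∀ i x, Fop i [x] = F i x) {a b : ℕ → A} :
    Reduction (fun _ => 1) Fop a b ↔ ∃ e, StrictMono e ∧ ∀ k, Reaches F (b (e k)) (a k) := by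
  constructor
  · rintro ⟨t, len, e, he, ht, hte⟩
    have hsingle := fun j => OTree.exists_eq_singleton_of_eval_eq_some hOp (ht j) (hte j)
    obtain rfl : len = fun _ => 1 := funext fun j => by
      obtain ⟨x, hx, -⟩ := hsingle j
      simpa using congrArg List.length hx
    refine ⟨e, he, fun j => ?_⟩
    obtain ⟨x, hx, hxa⟩ := hsingle j
    simp only [Finset.sum_const, Finset.card_range, smul_eq_mul, mul_one, List.range_one,
      List.map_cons, add_zero, List.map_nil, List.cons.injEq, and_true] at hx
    exact hx ▸ hxa
  · rintro ⟨e, he, hr⟩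
    choose t ht hte using fun k => exists_eval_eq_some_of_reaches hOp (hr k)
    exact ⟨t, fun _ => 1, e, he, ht, fun j => by simpa using hte j⟩

theorem ramseyAlgebra_of_forall_exists_fixed (hOp : ∀ i x, Fop i [x] = F i x)
    (h : ∀ x, ∃ y, Reaches F x y ∧ ∀ i, F i y = y) : RamseyAlgebra (fun _ => 1) Fop := by
  intro b X
  choose y hby hy using fun j => h (b j)
  obtain ⟨e, he, hX⟩ := exists_strictMono_forall_mem_or_forall_notMem y X
  have hFR : FR (fun _ => 1) Fop (y ∘ e) = Set.range (y ∘ e) := by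
    ext z
    simp only [mem_FR_iff_exists_reaches hOp, Set.mem_range, Function.comp_apply]
    exact exists_congr fun k => ⟨fun hz => (hz.eq_of_forall_apply_eq (hy (e k))).symm,
      fun hz => hz ▸ .refl⟩
  refine ⟨y ∘ e, (reduction_iff_exists_strictMono hOp).2 ⟨e, he, fun k => hby (e k)⟩, ?_⟩
  rw [hFR]
  rcases hX with hX | hX
  · exact .inl (Set.range_subset_iff.2 hX)
  · refine .inr (Set.eq_empty_of_forall_notMem ?_)
    rintro _ ⟨⟨k, rfl⟩, hz⟩
    exact hX k hz

theorem exists_fixed_of_ramseyAlgebra (hOp : ∀ i x, Fop i [x] = F i x)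
    (hR : RamseyAlgebra (fun _ => 1) Fop) (x : A) : ∃ y, Reaches F x y ∧ ∀ i, F i y = y := by
  by_contra! hx
  have : ∀ z, ∃ w, Reaches F z w ∧ (Reaches F x z → w ≠ z) := fun z => by
    by_cases hz : Reaches F x z
    · obtain ⟨i, hi⟩ := hx z hz
      exact ⟨F i z, .single ⟨i, rfl⟩, fun _ => hi⟩
    · exact ⟨z, .refl, fun h => absurd h hz⟩
  choose g hg hgz using this
  obtain ⟨a, hred, hhom⟩ := hR (fun _ => x) (Function.grandOrbitColoring g)
  obtain ⟨-, -, ha⟩ := (reduction_iff_exists_strictMono hOp).1 hred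
  have horbit : ∀ n, Reaches F (a 0) (g^[n] (a 0)) := fun n => by
    induction n with
    | zero => exact .refl
    | succ n ih => exact Function.iterate_succ_apply' g n _ ▸ ih.trans (hg _)
  have hFR : ∀ n, g^[n] (a 0) ∈ FR (fun _ => 1) Fop a := fun n =>
    (mem_FR_iff_exists_reaches hOp).2 ⟨0, horbit n⟩
  obtain ⟨⟨n, hn⟩, ⟨m, hm⟩⟩ := Function.exists_iterate_mem_and_notMem_grandOrbitColoring
    (fun n => hgz _ ((ha 0).trans (horbit n)))
  rcases hhom with hsub | hdisj
  · exact hm (hsub (hFR m))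
  · exact hdisj.subset ⟨hFR n, hn⟩

end RamseyAlg

open RamseyAlg in
/-- A unary algebra `(A, F)`, with the topology generated by the
universes of its subalgebras, is a Ramsey algebra iff the set of common fixed
points of all the operations is dense in `A`. -/
theorem stmt13 (ι A : Type) (F : ι → A → A)
    (Fop : ι → List A → A) (hOp : ∀ i x, Fop i [x] = F i x) :
    RamseyAlgebra (fun _ : ι => 1) Fop ↔
      @Dense A
        (TopologicalSpace.generateFrom {S : Set A | ∀ i, ∀ x ∈ S, F i x ∈ S})
        {c : A | ∀ i, F i c = c} := by
  rw [dense_generateFrom_iff]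
  exact ⟨exists_fixed_of_ramseyAlgebra hOp, ramseyAlgebra_of_forall_exists_fixed hOp⟩
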